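/- Let Z, Z' be as above and suppose {F_1,…,F_p} is a good set of minimal separators of the point P_i of multiplicity m_i. Then for each j = 1,…,p, the colon ideal (I_Z, F_1,…,F_{j−1}) : (F_j) in R equals I_{P_i} (for j = 1 this reads I_Z : (F_1) = I_{P_i}). -/

import Mathlib

/-!
Formalization of statements from "Separators of fat points in ℙⁿ×ℙᵐ"
(Guardo–Van Tuyl).  The bigraded coordinate ring `R = k[x₀,…,xₙ,y₀,…,y_m]` of
`ℙⁿ×ℙᵐ` is modelled as `MvPolynomial (Fin (n+1) ⊕ Fin (m+1)) k`, where the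
variable `X (Sum.inl i)` is `xᵢ` (degree `(1,0)`) and `X (Sum.inr j)` is `yⱼ`
(degree `(0,1)`); bihomogeneity is weighted homogeneity for the weight `biWeight`.
-/

open MvPolynomial

noncomputable section

/-- The ℕ²-graded coordinate ring `R` of `ℙⁿ×ℙᵐ`. -/
abbrev BiRing (k : Type) [Field k] (n m : ℕ) : Type :=
  MvPolynomial (Fin (n + 1) ⊕ Fin (m + 1)) k

/-- The weight function on the variables giving the ℕ²-grading:
`deg xᵢ = (1,0)` and `deg yⱼ = (0,1)`. -/
def biWeight (n m : ℕ) : Fin (n + 1) ⊕ Fin (m + 1) → ℕ × ℕ :=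
  Sum.elim (fun _ => (1, 0)) (fun _ => (0, 1))

variable {k : Type} [Field k] {n m : ℕ}

/-- `F` is bihomogeneous of degree `d ∈ ℕ²`. -/
def BihomOfDeg (F : BiRing k n m) (d : ℕ × ℕ) : Prop :=
  IsWeightedHomogeneous (biWeight n m) F d

/-- `I` is the defining (prime) ideal of a point of `ℙⁿ×ℙᵐ`: it is generated by
`n` linear forms of degree `(1,0)` and `m` linear forms of degree `(0,1)` which
are linearly independent (so that they cut out a single point of `ℙⁿ×ℙᵐ`). -/
def IsPointIdeal (I : Ideal (BiRing k n m)) : Prop :=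
  ∃ (L : Fin n → BiRing k n m) (L' : Fin m → BiRing k n m),
    (∀ a, BihomOfDeg (L a) (1, 0)) ∧ (∀ b, BihomOfDeg (L' b) (0, 1)) ∧
    LinearIndependent k (Sum.elim L L') ∧
    I = Ideal.span (Set.range L ∪ Set.range L')

/-- The defining ideal `I_Z = I_{P₁}^{m₁} ∩ ⋯ ∩ I_{P_s}^{m_s}` of the fat point
scheme `Z = m₁P₁ + ⋯ + m_sP_s`. -/
def fatIdeal {s : ℕ} (P : Fin s → Ideal (BiRing k n m)) (mult : Fin s → ℕ) :
    Ideal (BiRing k n m) :=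
  ⨅ j, P j ^ mult j

/-- `F` is a separator of the point `Pᵢ` of multiplicity `mᵢ`, where `IZ = I_Z`
and `IZ' = I_{Z'}`: a bihomogeneous form lying in `I_{Z'} \ I_Z`
(equivalently `F ∈ I_{Pᵢ}^{mᵢ-1} \ I_{Pᵢ}^{mᵢ}` and `F ∈ I_{Pⱼ}^{mⱼ}` for `j ≠ i`). -/
def IsSeparator (IZ IZ' : Ideal (BiRing k n m)) (F : BiRing k n m) : Prop :=
  (∃ d, BihomOfDeg F d) ∧ F ∈ IZ' ∧ F ∉ IZ

/-- `F₁,…,F_p` is a set of minimal separators of `Pᵢ` of multiplicity `mᵢ`: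
each `Fⱼ` is a (bihomogeneous) separator, their residue classes generate the
ideal `I_{Z'}/I_Z` of `R/I_Z` (equivalently `I_Z + (F₁,…,F_p) = I_{Z'}`), and no
fewer than `p` bihomogeneous forms have classes generating `I_{Z'}/I_Z`. -/
def IsMinSepSet (IZ IZ' : Ideal (BiRing k n m)) {p : ℕ}
    (F : Fin p → BiRing k n m) : Prop :=
  (∀ j, IsSeparator IZ IZ' (F j)) ∧
  IZ ⊔ Ideal.span (Set.range F) = IZ' ∧
  ∀ q : ℕ, q < p → ∀ G : Fin q → BiRing k n m,
    (∀ j, ∃ d, BihomOfDeg (G j) d) → IZ ⊔ Ideal.span (Set.range G) ≠ IZ'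

/-- A family `F₁,…,F_p` of forms with `deg Fⱼ = d j` is a *good* set (of minimal
separators) if for every `t ∈ ℕ²` the classes of `x₀^{t₁-dⱼ₁} y₀^{t₂-dⱼ₂} Fⱼ`
(over those `j` with `d j ⪯ t` componentwise) are linearly independent in
`(I_{Z'}/I_Z)_t`; i.e. any `k`-linear combination lying in `I_Z` has all its
coefficients equal to zero. -/
def IsGoodSepSet {p : ℕ} (IZ : Ideal (BiRing k n m)) (F : Fin p → BiRing k n m)
    (d : Fin p → ℕ × ℕ) : Prop :=
  ∀ t : ℕ × ℕ, ∀ c : Fin p → k,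
    (∑ j ∈ Finset.univ.filter (fun j => (d j).1 ≤ t.1 ∧ (d j).2 ≤ t.2),
        c j • (X (Sum.inl 0) ^ (t.1 - (d j).1) * X (Sum.inr 0) ^ (t.2 - (d j).2) * F j))
      ∈ IZ →
    ∀ j : Fin p, (d j).1 ≤ t.1 → (d j).2 ≤ t.2 → c j = 0

/-!
As `x₀, y₀ ∉ I_{P_i}` and `I_{P_i}` is cut out by linear forms, every form of bidegree `e` is
congruent modulo `I_{P_i}` to `γ x₀^{e₁} y₀^{e₂}` for some `γ ∈ k`; moreover
`I_{P_i} I_{Z'} ⊆ I_Z`. Hence if `G F_j ∈ (I_Z, F₁, …, F_{j-1})` with `G` bihomogeneous, then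
also `γ x₀^{e₁} y₀^{e₂} F_j` lies in that ideal. Taking its component of degree `e + deg F_j` and
reducing the coefficients of the `F_l` in the same way writes it, modulo `I_Z`, as a combination
of the forms `x₀^a y₀^b F_l` with `l < j`; goodness forces `γ = 0`, i.e. `G ∈ I_{P_i}`. The colon
ideal is homogeneous, so this proves `⊆`; `⊇` is `I_{P_i} I_{Z'} ⊆ I_Z`.
-/

theorem exists_sub_smul_mem_span_of_finrank_eq {K V ι : Type*} [Field K] [AddCommGroup V]
    [Module K V] [Fintype ι] {W : Submodule K V} [FiniteDimensional K W] {L : ι → V}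
    (hL : LinearIndependent K L) (hLW : ∀ a, L a ∈ W)
    (hdim : Module.finrank K W = Fintype.card ι + 1) {v : V} (hvW : v ∈ W)
    (hv : v ∉ Submodule.span K (Set.range L)) {w : V} (hw : w ∈ W) :
    ∃ α : K, w - α • v ∈ Submodule.span K (Set.range L) := by
  let b : Option ι → V := fun o => Option.casesOn' o v L
  have hspan : Submodule.span K (Set.range b) = W := by
    refine Submodule.eq_of_le_of_finrank_eq ?_ ?_
    · rw [Submodule.span_le]
      rintro _ ⟨_ | a, rfl⟩
      exacts [hvW, hLW a]
    · rw [finrank_span_eq_card (hL.option hv), Fintype.card_option, hdim]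
  obtain ⟨c, hc⟩ := (Submodule.mem_span_range_iff_exists_fun K).mp (hspan ▸ hw)
  refine ⟨c none, ?_⟩
  rw [← hc, Fintype.sum_option]
  change c none • v + _ - c none • v ∈ _
  rw [add_sub_cancel_left]
  exact Submodule.sum_mem _ fun a _ => Submodule.smul_mem _ _ (Submodule.subset_span ⟨a, rfl⟩)

lemma degree_eq_weight_biWeight (u : Fin (n + 1) ⊕ Fin (m + 1) →₀ ℕ) :
    u.degree = (Finsupp.weight (biWeight n m) u).1 + (Finsupp.weight (biWeight n m) u).2 := by
  simp only [Finsupp.degree_apply, Finsupp.weight_apply, Finsupp.sum, Prod.fst_sum, Prod.snd_sum,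
    ← Finset.sum_add_distrib]
  refine Finset.sum_congr rfl fun v _ => ?_
  cases v <;> simp [biWeight]

lemma exists_eq_single_of_weight_eq_biWeight {u : Fin (n + 1) ⊕ Fin (m + 1) →₀ ℕ}
    {v : Fin (n + 1) ⊕ Fin (m + 1)} (hu : Finsupp.weight (biWeight n m) u = biWeight n m v) :
    ∃ v', biWeight n m v' = biWeight n m v ∧ u = Finsupp.single v' 1 := by
  have hdeg : u.degree = 1 := by
    rw [degree_eq_weight_biWeight, hu]; cases v <;> rfl
  obtain ⟨v', rfl⟩ : u ∈ Set.range (Finsupp.single · 1) := Finsupp.range_single_one.ge hdeg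
  refine ⟨v', ?_, rfl⟩
  simpa [Finsupp.weight_single] using hu

lemma mem_span_X_of_bihomOfDeg {f : BiRing k n m} {v : Fin (n + 1) ⊕ Fin (m + 1)}
    (hf : BihomOfDeg f (biWeight n m v)) :
    f ∈ Submodule.span k (X '' {v' | biWeight n m v' = biWeight n m v}) := by
  have hmem : f ∈ weightedHomogeneousSubmodule k (biWeight n m) (biWeight n m v) := hf
  rw [weightedHomogeneousSubmodule_eq_finsupp_supported,
    AddMonoidAlgebra.supported_eq_span_single] at hmem
  refine Submodule.span_mono ?_ hmem
  rintro _ ⟨u, hu, rfl⟩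
  obtain ⟨v', hv', rfl⟩ := exists_eq_single_of_weight_eq_biWeight hu
  exact ⟨v', hv', rfl⟩

lemma exists_X_sub_smul_X_mem {r : ℕ} {e : Fin (r + 1) → Fin (n + 1) ⊕ Fin (m + 1)}
    (he : Function.Injective e)
    (hrange : ∀ v, biWeight n m v = biWeight n m (e 0) → v ∈ Set.range e)
    {I : Ideal (BiRing k n m)} {L : Fin r → BiRing k n m} (hL : LinearIndependent k L)
    (hLdeg : ∀ a, BihomOfDeg (L a) (biWeight n m (e 0))) (hLI : ∀ a, L a ∈ I)
    (h0 : X (e 0) ∉ I) (i : Fin (r + 1)) : ∃ α : k, X (e i) - α • X (e 0) ∈ I := by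
  let W := Submodule.span k (Set.range (X ∘ e : Fin (r + 1) → BiRing k n m))
  have : FiniteDimensional k W := FiniteDimensional.span_of_finite k (Set.finite_range _)
  have hspanL : Submodule.span k (Set.range L) ≤ I.restrictScalars k := by
    rw [Submodule.span_le]
    rintro _ ⟨a, rfl⟩
    exact hLI a
  have hLW (a : Fin r) : L a ∈ W := by
    refine Submodule.span_mono ?_ (mem_span_X_of_bihomOfDeg (hLdeg a))
    rintro _ ⟨v, hv, rfl⟩
    obtain ⟨j, rfl⟩ := hrange v hv
    exact ⟨j, rfl⟩
  have hdim : Module.finrank k W = Fintype.card (Fin r) + 1 :=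
    (finrank_span_eq_card ((linearIndependent_X _ k).comp e he)).trans (by simp)
  obtain ⟨α, hα⟩ := exists_sub_smul_mem_span_of_finrank_eq hL hLW hdim
    (Submodule.subset_span ⟨0, rfl⟩) (fun h => h0 (hspanL h)) (Submodule.subset_span ⟨i, rfl⟩)
  exact ⟨α, hspanL hα⟩

def x0y0Pow (e : ℕ × ℕ) : BiRing k n m := X (Sum.inl 0) ^ e.1 * X (Sum.inr 0) ^ e.2

lemma x0y0Pow_add (e e' : ℕ × ℕ) :
    (x0y0Pow (e + e') : BiRing k n m) = x0y0Pow e * x0y0Pow e' := by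
  simp only [x0y0Pow, Prod.fst_add, Prod.snd_add, pow_add]
  ring

lemma x0y0Pow_nsmul (c : ℕ) (e : ℕ × ℕ) :
    (x0y0Pow (c • e) : BiRing k n m) = x0y0Pow e ^ c := by
  simp only [x0y0Pow, Prod.smul_fst, Prod.smul_snd, smul_eq_mul, mul_pow, pow_mul']

lemma bihomOfDeg_x0y0Pow (e : ℕ × ℕ) : BihomOfDeg (x0y0Pow e : BiRing k n m) e := by
  show IsWeightedHomogeneous _ (X _ ^ e.1 * X _ ^ e.2) e
  convert ((isWeightedHomogeneous_X k (biWeight n m) (Sum.inl 0)).pow e.1).mul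
    ((isWeightedHomogeneous_X k (biWeight n m) (Sum.inr 0)).pow e.2) using 1
  ext <;> simp [biWeight]

lemma IsPointIdeal.exists_X_sub_smul_x0y0Pow_mem {I : Ideal (BiRing k n m)} (hI : IsPointIdeal I)
    (hx0 : X (Sum.inl 0) ∉ I) (hy0 : X (Sum.inr 0) ∉ I) (v : Fin (n + 1) ⊕ Fin (m + 1)) :
    ∃ α : k, X v - α • x0y0Pow (biWeight n m v) ∈ I := by
  obtain ⟨L, L', hL, hL', hli, rfl⟩ := hI
  have hLI (a : Fin n) : L a ∈ Ideal.span (Set.range L ∪ Set.range L') :=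
    Ideal.subset_span (Or.inl ⟨a, rfl⟩)
  have hL'I (b : Fin m) : L' b ∈ Ideal.span (Set.range L ∪ Set.range L') :=
    Ideal.subset_span (Or.inr ⟨b, rfl⟩)
  rcases v with i | j
  · simpa [x0y0Pow, biWeight] using exists_X_sub_smul_X_mem Sum.inl_injective
      (by rintro (v | v) hv <;> simp_all [biWeight]) (hli.comp _ Sum.inl_injective) hL hLI hx0 i
  · simpa [x0y0Pow, biWeight] using exists_X_sub_smul_X_mem Sum.inr_injective
      (by rintro (v | v) hv <;> simp_all [biWeight]) (hli.comp _ Sum.inr_injective) hL' hL'I hy0 j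

lemma exists_monomial_sub_smul_x0y0Pow_mem {I : Ideal (BiRing k n m)}
    (hI : ∀ v, ∃ α : k, X v - α • x0y0Pow (biWeight n m v) ∈ I)
    (u : Fin (n + 1) ⊕ Fin (m + 1) →₀ ℕ) :
    ∃ γ : k, monomial u 1 - γ • x0y0Pow (Finsupp.weight (biWeight n m) u) ∈ I := by
  simp_rw [← Ideal.Quotient.eq, smul_eq_C_mul]
  induction u using Finsupp.induction with
  | zero => exact ⟨1, by simp [x0y0Pow]⟩
  | single_add v c f _ _ ih =>
    obtain ⟨γ, hγ⟩ := ih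
    obtain ⟨α, hα⟩ := hI v
    rw [← Ideal.Quotient.eq, smul_eq_C_mul] at hα
    refine ⟨α ^ c * γ, ?_⟩
    rw [← mul_one (1 : k), ← monomial_mul, ← X_pow_eq_monomial, map_add,
      Finsupp.weight_single, x0y0Pow_add, x0y0Pow_nsmul]
    simp only [map_mul, map_pow, hα, hγ]
    ring

lemma exists_sub_smul_x0y0Pow_mem_of_bihomOfDeg {I : Ideal (BiRing k n m)}
    (hI : ∀ v, ∃ α : k, X v - α • x0y0Pow (biWeight n m v) ∈ I) {B : BiRing k n m}
    {e : ℕ × ℕ} (hB : BihomOfDeg B e) : ∃ γ : k, B - γ • x0y0Pow e ∈ I := by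
  induction hB using IsWeightedHomogeneous.induction_on with
  | zero => exact ⟨0, by simp⟩
  | add p q _ _ hp hq =>
    obtain ⟨γ, hγ⟩ := hp
    obtain ⟨δ, hδ⟩ := hq
    exact ⟨γ + δ, by convert I.add_mem hγ hδ using 1; module⟩
  | monomial u r hu =>
    obtain ⟨γ, hγ⟩ := exists_monomial_sub_smul_x0y0Pow_mem hI u
    rw [hu] at hγ
    refine ⟨r * γ, ?_⟩
    convert I.smul_of_tower_mem r hγ using 1
    rw [smul_sub, smul_monomial, smul_eq_mul, mul_one, mul_smul]

local instance : GradedAlgebra (weightedHomogeneousSubmodule k (biWeight n m)) :=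
  weightedGradedAlgebra k (biWeight n m)

local notation "𝒜" => weightedHomogeneousSubmodule k (biWeight n m)

theorem Ideal.IsHomogeneous.pow {ι σ A : Type*} [CommSemiring A] [DecidableEq ι] [AddMonoid ι]
    [SetLike σ A] [AddSubmonoidClass σ A] {𝒢 : ι → σ} [GradedRing 𝒢] {I : Ideal A}
    (hI : I.IsHomogeneous 𝒢) (c : ℕ) : (I ^ c).IsHomogeneous 𝒢 := by
  induction c with
  | zero => simpa only [_root_.pow_zero, Ideal.one_eq_top] using Ideal.IsHomogeneous.top 𝒢
  | succ c ih => rw [_root_.pow_succ]; exact ih.mul hI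

lemma IsPointIdeal.isHomogeneous {I : Ideal (BiRing k n m)} (hI : IsPointIdeal I) :
    I.IsHomogeneous 𝒜 := by
  obtain ⟨L, L', hL, hL', -, rfl⟩ := hI
  refine Ideal.homogeneous_span _ _ ?_
  rintro _ (⟨a, rfl⟩ | ⟨b, rfl⟩)
  exacts [⟨(1, 0), hL a⟩, ⟨(0, 1), hL' b⟩]

lemma isHomogeneous_fatIdeal {s : ℕ} {P : Fin s → Ideal (BiRing k n m)}
    (hP : ∀ j, IsPointIdeal (P j)) (mult : Fin s → ℕ) : (fatIdeal P mult).IsHomogeneous 𝒜 :=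
  Ideal.IsHomogeneous.iInf fun j => (hP j).isHomogeneous.pow (mult j)

lemma mul_fatIdeal_update_le {s : ℕ} (P : Fin s → Ideal (BiRing k n m)) {mult : Fin s → ℕ}
    {i : Fin s} (hi : 1 ≤ mult i) :
    P i * fatIdeal P (Function.update mult i (mult i - 1)) ≤ fatIdeal P mult := by
  unfold fatIdeal
  refine le_iInf fun l => ?_
  have hle := iInf_le (fun l => P l ^ Function.update mult i (mult i - 1) l) l
  rcases eq_or_ne l i with rfl | hne
  · calc P l * ⨅ l', P l' ^ Function.update mult l (mult l - 1) l'
        ≤ P l * P l ^ (mult l - 1) := by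
          rw [Function.update_self] at hle
          exact Ideal.mul_mono_right hle
      _ = P l ^ mult l := by rw [← pow_succ', Nat.sub_add_cancel hi]
  · rw [Function.update_of_ne hne] at hle
    exact Ideal.mul_le_right.trans hle

section Separators

variable {IZ IZ' P : Ideal (BiRing k n m)} {p : ℕ} {F : Fin p → BiRing k n m}
  {d : Fin p → ℕ × ℕ}

lemma IsGoodSepSet.eq_zero_of_smul_sub_sum_mem (hgood : IsGoodSepSet IZ F d) {t : ℕ × ℕ}
    {j : Fin p} (hj : d j ≤ t) {γ : k} {β : Fin p → k} (hβ : ∀ l, β l ≠ 0 → l < j ∧ d l ≤ t)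
    (h : γ • (x0y0Pow (t - d j) * F j) - ∑ l, β l • (x0y0Pow (t - d l) * F l) ∈ IZ) :
    γ = 0 := by
  have hβj : β j = 0 := by_contra fun hne => (hβ j hne).1.false
  have hsum : ∑ l ∈ Finset.univ.filter (fun l => (d l).1 ≤ t.1 ∧ (d l).2 ≤ t.2),
      (Pi.single j γ - β : Fin p → k) l • (x0y0Pow (t - d l) * F l)
      = γ • (x0y0Pow (t - d j) * F j) - ∑ l, β l • (x0y0Pow (t - d l) * F l) := by
    rw [Finset.sum_filter_of_ne]
    · simp [sub_smul, Finset.sum_sub_distrib]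
    · intro l _ hl
      by_cases hlj : l = j
      · exact hlj ▸ hj
      · exact (hβ l (by simpa [Pi.single_apply, hlj] using left_ne_zero_of_smul hl)).2
  rw [← hsum] at h
  simpa [hβj] using hgood t _ h j hj.1 hj.2

lemma exists_decompose_mul_sub_smul_mem
    (hP : ∀ v, ∃ α : k, X v - α • x0y0Pow (biWeight n m v) ∈ P) (hPIZ' : P * IZ' ≤ IZ)
    {f : BiRing k n m} {a : ℕ × ℕ} (hf : BihomOfDeg f a) (hfZ' : f ∈ IZ') (c : BiRing k n m)
    (t : ℕ × ℕ) :
    ∃ β : k, (β ≠ 0 → a ≤ t) ∧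
      (DirectSum.decompose 𝒜 (c * f) t : BiRing k n m) - β • (x0y0Pow (t - a) * f) ∈ IZ := by
  by_cases hat : a ≤ t
  · obtain ⟨β, hβ⟩ :=
      exists_sub_smul_x0y0Pow_mem_of_bihomOfDeg hP (DirectSum.decompose 𝒜 c (t - a)).2
    refine ⟨β, fun _ => hat, ?_⟩
    rw [DirectSum.coe_decompose_mul_of_right_mem_of_le 𝒜 hf hat, ← smul_mul_assoc, ← sub_mul]
    exact hPIZ' (Ideal.mul_mem_mul hβ hfZ')
  · refine ⟨0, fun h => absurd rfl h, ?_⟩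
    rw [DirectSum.coe_decompose_mul_of_right_mem_of_not_le 𝒜 hf hat, zero_smul, sub_zero]
    exact IZ.zero_mem

lemma smul_eq_zero_of_smul_mul_mem_sup_span
    (hP : ∀ v, ∃ α : k, X v - α • x0y0Pow (biWeight n m v) ∈ P) (hPIZ' : P * IZ' ≤ IZ)
    (hIZ : IZ.IsHomogeneous 𝒜)
    (hdeg : ∀ l, BihomOfDeg (F l) (d l)) (hFZ' : ∀ l, F l ∈ IZ') (hgood : IsGoodSepSet IZ F d)
    {j : Fin p} {t : ℕ × ℕ} (hj : d j ≤ t) {γ : k}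
    (h : γ • (x0y0Pow (t - d j) * F j) ∈ IZ ⊔ Ideal.span (F '' {l | l < j})) : γ = 0 := by
  obtain ⟨H, hH, y, hy, hHy⟩ := Submodule.mem_sup.mp h
  obtain ⟨c, hc, rfl⟩ := Finsupp.mem_span_image_iff_linearCombination _ |>.mp hy
  choose β hβt hβ using fun l =>
    exists_decompose_mul_sub_smul_mem hP hPIZ' (hdeg l) (hFZ' l) (c l) t
  refine hgood.eq_zero_of_smul_sub_sum_mem hj (β := fun l => if l < j then β l else 0) ?_ ?_
  · intro l hl
    split_ifs at hl with hlj
    exacts [⟨hlj, hβt l hl⟩, absurd rfl hl]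
  have hhom : γ • (x0y0Pow (t - d j) * F j) ∈ 𝒜 t := by
    refine Submodule.smul_mem _ γ ?_
    simpa [tsub_add_cancel_of_le hj] using (bihomOfDeg_x0y0Pow (t - d j)).mul (hdeg j)
  have hγ : γ • (x0y0Pow (t - d j) * F j) = (DirectSum.decompose 𝒜 H t : BiRing k n m)
      + ∑ l, (DirectSum.decompose 𝒜 (c l * F l) t : BiRing k n m) := by
    rw [Finsupp.linearCombination_apply, Finsupp.sum_fintype _ _ (by simp)] at hHy
    have := congrArg (GradedRing.proj 𝒜 t) hHy
    simp only [map_add, map_sum, GradedRing.proj_apply, smul_eq_mul] at this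
    rw [this, DirectSum.decompose_of_mem_same _ hhom]
  have hterm (l : Fin p) : (DirectSum.decompose 𝒜 (c l * F l) t : BiRing k n m)
      - (if l < j then β l else 0) • (x0y0Pow (t - d l) * F l) ∈ IZ := by
    split_ifs with hlj
    · exact hβ l
    · rw [Finsupp.notMem_support_iff.mp (fun hl => hlj (hc hl))]
      simp
  rw [hγ, add_sub_assoc, ← Finset.sum_sub_distrib]
  exact IZ.add_mem (hIZ t hH) (IZ.sum_mem fun l _ => hterm l)

lemma mem_of_bihomOfDeg_of_mul_mem_sup_span
    (hP : ∀ v, ∃ α : k, X v - α • x0y0Pow (biWeight n m v) ∈ P) (hPIZ' : P * IZ' ≤ IZ)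
    (hIZ : IZ.IsHomogeneous 𝒜) (hdeg : ∀ l, BihomOfDeg (F l) (d l)) (hFZ' : ∀ l, F l ∈ IZ')
    (hgood : IsGoodSepSet IZ F d) {j : Fin p} {G : BiRing k n m} {e : ℕ × ℕ}
    (hG : BihomOfDeg G e) (h : G * F j ∈ IZ ⊔ Ideal.span (F '' {l | l < j})) : G ∈ P := by
  obtain ⟨γ, hγ⟩ := exists_sub_smul_x0y0Pow_mem_of_bihomOfDeg hP hG
  suffices γ = 0 by simpa [this] using hγ
  refine smul_eq_zero_of_smul_mul_mem_sup_span hP hPIZ' hIZ hdeg hFZ' hgood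
    (t := e + d j) le_add_self ?_
  have hsplit : γ • (x0y0Pow e * F j) = G * F j - (G - γ • x0y0Pow e) * F j := by
    rw [sub_mul, sub_sub_cancel, smul_mul_assoc]
  rw [add_tsub_cancel_right, hsplit]
  exact sub_mem h (Ideal.mem_sup_left (hPIZ' (Ideal.mul_mem_mul hγ (hFZ' j))))

lemma colon_le_of_isGoodSepSet
    (hP : ∀ v, ∃ α : k, X v - α • x0y0Pow (biWeight n m v) ∈ P) (hPhom : P.IsHomogeneous 𝒜)
    (hPIZ' : P * IZ' ≤ IZ) (hIZ : IZ.IsHomogeneous 𝒜) (hdeg : ∀ l, BihomOfDeg (F l) (d l))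
    (hFZ' : ∀ l, F l ∈ IZ') (hgood : IsGoodSepSet IZ F d) (j : Fin p) :
    (IZ ⊔ Ideal.span (F '' {l | l < j})).colon (Ideal.span {F j}) ≤ P := by
  intro g hg
  have hJ : (IZ ⊔ Ideal.span (F '' {l | l < j})).IsHomogeneous 𝒜 :=
    hIZ.sup (Ideal.homogeneous_span _ _ (by rintro _ ⟨l, -, rfl⟩; exact ⟨d l, hdeg l⟩))
  have hgF := Submodule.mem_colon_span_singleton.mp hg
  refine hPhom.mem_iff.mpr fun e => mem_of_bihomOfDeg_of_mul_mem_sup_span hP hPIZ' hIZ hdeg hFZ'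
    hgood (j := j) (DirectSum.decompose 𝒜 g e).2 ?_
  rw [← DirectSum.coe_decompose_mul_add_of_right_mem 𝒜 (hdeg j)]
  exact hJ _ hgF

end Separators

theorem stmt11_general {s : ℕ}
    (P : Fin s → Ideal (BiRing k n m)) (mult : Fin s → ℕ)
    (hP : ∀ j, IsPointIdeal (P j))
    (hmult : ∀ j, 1 ≤ mult j) (i : Fin s)
    (IZ IZ' : Ideal (BiRing k n m))
    (hIZ : IZ = fatIdeal P mult)
    (hIZ' : IZ' = fatIdeal P (Function.update mult i (mult i - 1)))
    (hx : ∀ g : BiRing k n m, X (Sum.inl 0) * g ∈ IZ → g ∈ IZ)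
    (hy : ∀ g : BiRing k n m, X (Sum.inr 0) * g ∈ IZ → g ∈ IZ)
    {p : ℕ} (F : Fin p → BiRing k n m) (d : Fin p → ℕ × ℕ)
    (hdeg : ∀ j, BihomOfDeg (F j) (d j))
    (hmin : IsMinSepSet IZ IZ' F)
    (hgood : IsGoodSepSet IZ F d) :
    ∀ j : Fin p,
      Submodule.colon (IZ ⊔ Ideal.span (F '' {l : Fin p | l < j}))
        (Ideal.span {F j}) = P i := by
  intro j
  have hPIZ' : P i * IZ' ≤ IZ := hIZ ▸ hIZ' ▸ mul_fatIdeal_update_le P (hmult i)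
  have hFZ' (l : Fin p) : F l ∈ IZ' :=
    hmin.2.1 ▸ Ideal.mem_sup_right (Ideal.subset_span ⟨l, rfl⟩)
  have hsep (g : BiRing k n m) (hg : g ∈ P i) : g * F j ∈ IZ :=
    hPIZ' (Ideal.mul_mem_mul hg (hFZ' j))
  have hFj : F j ∉ IZ := (hmin.1 j).2.2
  have hx0 : X (Sum.inl 0) ∉ P i := fun h => hFj (hx _ (hsep _ h))
  have hy0 : X (Sum.inr 0) ∉ P i := fun h => hFj (hy _ (hsep _ h))
  refine le_antisymm ?_ fun g hg => ?_
  · exact colon_le_of_isGoodSepSet ((hP i).exists_X_sub_smul_x0y0Pow_mem hx0 hy0)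
      (hP i).isHomogeneous hPIZ' (hIZ ▸ isHomogeneous_fatIdeal hP mult) hdeg hFZ' hgood j
  · exact Submodule.mem_colon_span_singleton.mpr (Ideal.mem_sup_left (hsep g hg))

/-- Lemma 6.1: if `{F₁,…,F_p}` is a good set of minimal
separators of the point `Pᵢ` of multiplicity `mᵢ`, then for each `j`,
`(I_Z, F₁,…,F_{j-1}) : (Fⱼ) = I_{Pᵢ}`. -/
theorem stmt11 [IsAlgClosed k] [CharZero k] {s : ℕ}
    (P : Fin s → Ideal (BiRing k n m)) (mult : Fin s → ℕ)
    (hP : ∀ j, IsPointIdeal (P j)) (hinj : Function.Injective P)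
    (hmult : ∀ j, 1 ≤ mult j) (i : Fin s)
    (IZ IZ' : Ideal (BiRing k n m))
    (hIZ : IZ = fatIdeal P mult)
    (hIZ' : IZ' = fatIdeal P (Function.update mult i (mult i - 1)))
    (hx : ∀ g : BiRing k n m, X (Sum.inl 0) * g ∈ IZ → g ∈ IZ)
    (hy : ∀ g : BiRing k n m, X (Sum.inr 0) * g ∈ IZ → g ∈ IZ)
    (hx' : ∀ g : BiRing k n m, X (Sum.inl 0) * g ∈ IZ' → g ∈ IZ')
    (hy' : ∀ g : BiRing k n m, X (Sum.inr 0) * g ∈ IZ' → g ∈ IZ')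
    {p : ℕ} (F : Fin p → BiRing k n m) (d : Fin p → ℕ × ℕ)
    (hdeg : ∀ j, BihomOfDeg (F j) (d j))
    (hmin : IsMinSepSet IZ IZ' F)
    (hgood : IsGoodSepSet IZ F d) :
    ∀ j : Fin p,
      Submodule.colon (IZ ⊔ Ideal.span (F '' {l : Fin p | l < j}))
        (Ideal.span {F j}) = P i :=
  stmt11_general P mult hP hmult i IZ IZ' hIZ hIZ' hx hy F d hdeg hmin hgood
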